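/- Let R be a domain, ν a valuation on R with values in a linearly ordered abelian group, and suppose r, x₁, …, xₙ ∈ R with r in the integral closure of the ideal (x₁, …, xₙ) and ν non-negative on R. Then ν(r) ≥ minᵢ ν(xᵢ). -/

import Mathlib

def IsIntegralOverIdeal {R : Type*} [CommRing R] (I : Ideal R) (r : R) : Prop :=
  ∃ n : ℕ, 0 < n ∧ ∃ a : ℕ → R, (∀ i ∈ Finset.Icc 1 n, a i ∈ I ^ i) ∧
    r ^ n + ∑ i ∈ Finset.Icc 1 n, a i * r ^ (n - i) = 0

/-!
Let `c = minᵢ ν xᵢ`. Since `ν ≥ 0`, every element of `Iʲ` has value at least `j • c`. If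
`ν r < c`, the term `aᵢ rᴺ⁻ⁱ` of the integral equation has value at least
`i • c + (N - i) • ν r ≥ c + (N - 1) • ν r`, hence so does `rᴺ = -∑ aᵢ rᴺ⁻ⁱ`; as
`ν (rᴺ) = ν r + (N - 1) • ν r` and `(N - 1) • ν r` is finite, cancelling gives `c ≤ ν r`.
-/

open Finset

theorem WithTop.map_one_eq_zero_of_map_mul {M Γ : Type*} [MulZeroOneClass M] [Nontrivial M]
    [AddCommGroup Γ] {ν : M → WithTop Γ} (h0 : ∀ a, ν a = ⊤ ↔ a = 0)
    (hmul : ∀ a b, ν (a * b) = ν a + ν b) : ν 1 = 0 := by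
  obtain ⟨g, hg⟩ := WithTop.ne_top_iff_exists.mp (mt (h0 1).1 one_ne_zero)
  have h11 := hmul 1 1
  rw [one_mul, ← hg] at h11
  have hgg : g = g + g := by exact_mod_cast h11
  rw [← hg, left_eq_add.mp hgg, WithTop.coe_zero]

namespace AddValuation

section Nonneg

variable {R Γ₀ : Type*} [CommRing R] [LinearOrderedAddCommMonoidWithTop Γ₀]
  {v : AddValuation R Γ₀}

theorem le_of_mem_span (hv : ∀ a, 0 ≤ v a) {s : Set R} {c : Γ₀} (hs : ∀ a ∈ s, c ≤ v a)
    {a : R} (ha : a ∈ Ideal.span s) : c ≤ v a := by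
  induction ha using Submodule.span_induction with
  | mem y hy => exact hs y hy
  | zero => simp
  | add y z _ _ hy hz => exact v.map_le_add hy hz
  | smul b y _ hy =>
    rw [smul_eq_mul, v.map_mul]
    exact le_add_of_nonneg_of_le (hv b) hy

theorem nsmul_le_of_mem_pow (hv : ∀ a, 0 ≤ v a) {I : Ideal R} {c : Γ₀} (hI : ∀ a ∈ I, c ≤ v a)
    (j : ℕ) {a : R} (ha : a ∈ I ^ j) : j • c ≤ v a := by
  induction j generalizing a with
  | zero => simpa using hv a
  | succ j ih =>
    rw [pow_succ] at ha
    refine Submodule.mul_induction_on ha (fun y hy z hz => ?_)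
      (fun y z hy hz => v.map_le_add hy hz)
    rw [v.map_mul, succ_nsmul]
    exact add_le_add (ih hy) (hI z hz)

end Nonneg

variable {R Γ : Type*} [CommRing R] [AddCommGroup Γ] [LinearOrder Γ] [IsOrderedAddMonoid Γ]
  {v : AddValuation R (WithTop Γ)}

theorem le_of_isIntegralOverIdeal (hv : ∀ a, 0 ≤ v a) {I : Ideal R} {c : WithTop Γ}
    (hI : ∀ a ∈ I, c ≤ v a) {r : R} (hr : IsIntegralOverIdeal I r) : c ≤ v r := by
  obtain ⟨N, hN, a, haI, heq⟩ := hr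
  by_contra! hrc
  have hterm : ∀ i ∈ Icc 1 N, c + (N - 1) • v r ≤ v (a i * r ^ (N - i)) := by
    intro i hi
    obtain ⟨j, rfl⟩ : ∃ j, i = j + 1 := ⟨i - 1, by grind⟩
    obtain ⟨k, rfl⟩ : ∃ k, N = j + 1 + k := ⟨N - (j + 1), by grind⟩
    calc c + (j + 1 + k - 1) • v r = c + j • v r + k • v r := by
          rw [show j + 1 + k - 1 = j + k by omega, add_nsmul, add_assoc]
      _ ≤ c + j • c + k • v r := by gcongr
      _ = (j + 1) • c + k • v r := by rw [succ_nsmul', add_comm]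
      _ ≤ v (a (j + 1) * r ^ (j + 1 + k - (j + 1))) := by
          rw [v.map_mul, v.map_pow, Nat.add_sub_cancel_left]
          gcongr
          exact nsmul_le_of_mem_pow hv hI _ (haI _ hi)
  have hrN : r ^ N = -∑ i ∈ Icc 1 N, a i * r ^ (N - i) := by linear_combination heq
  have hbound : c + (N - 1) • v r ≤ v r + (N - 1) • v r := by
    calc c + (N - 1) • v r ≤ v (r ^ N) := by
          rw [hrN, v.map_neg]
          exact v.map_le_sum hterm
      _ = v r + (N - 1) • v r := by
          rw [v.map_pow, ← succ_nsmul', Nat.sub_add_cancel hN]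
  have hfin : (N - 1) • v r ≠ ⊤ := by
    obtain ⟨g, hg⟩ := WithTop.ne_top_iff_exists.mp hrc.ne_top
    rw [← hg, ← WithTop.coe_nsmul]
    exact WithTop.coe_ne_top
  exact hrc.not_ge ((WithTop.add_le_add_iff_right hfin).mp hbound)

end AddValuation

/-- If `ν` is a valuation (with values in `WithTop Γ`, `ν a = ⊤ ↔ a = 0`)
on a domain `R` which is non-negative on `R`, and `r` lies in the integral closure of the
ideal `(x₁,…,xₙ)`, then `ν r ≥ minᵢ ν (xᵢ)`. -/
theorem stmt_18 {R Γ : Type*} [CommRing R] [IsDomain R] [AddCommGroup Γ] [LinearOrder Γ] [IsOrderedAddMonoid Γ]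
    (ν : R → WithTop Γ)
    (h0 : ∀ a : R, ν a = ⊤ ↔ a = 0)
    (hmul : ∀ a b : R, ν (a * b) = ν a + ν b)
    (hadd : ∀ a b : R, min (ν a) (ν b) ≤ ν (a + b))
    (hnonneg : ∀ a : R, 0 ≤ ν a)
    {n : ℕ} (x : Fin n → R) (r : R)
    (hr : IsIntegralOverIdeal (Ideal.span (Set.range x)) r) :
    Finset.univ.inf (fun i => ν (x i)) ≤ ν r := by
  let v : AddValuation R (WithTop Γ) :=
    .of ν ((h0 0).2 rfl) (WithTop.map_one_eq_zero_of_map_mul h0 hmul) hadd hmul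
  refine v.le_of_isIntegralOverIdeal hnonneg (fun a ha => v.le_of_mem_span hnonneg ?_ ha) hr
  rintro _ ⟨i, rfl⟩
  exact Finset.inf_le (mem_univ i)
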